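/- arXiv:2306.16407 — 2 statements merged into one kernel-verified Lean document; each statement's English description precedes it below -/
import Mathlib

section
/- For every i, j ∈ {0,…,n}, the image of F_i under σ̄^j equals F_{max{0, i−j}}, that is, σ̄^j(F_i) = F_{max{0,i−j}}. -/
/-- A Ferrers diagram of order `n`, given by its column heights
`c 0 ≤ c 1 ≤ … ≤ c (n-1) ≤ n` (so `c j` is the number of dots in the (j+1)-st column). -/
def IsFerrersDiagram (n : ℕ) (c : Fin n → ℕ) : Prop :=
  Monotone c ∧ ∀ i, c i ≤ n

/-- Extension of the column-height function to `ℕ`, by zero. -/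
def colExt (n : ℕ) (c : Fin n → ℕ) : ℕ → ℕ :=
  fun k => if h : k < n then c ⟨k, h⟩ else 0

/-- `ν_j(D,d) = Σ_{i=1}^{n-j} max{0, c_i - d + 1 + j}` (truncated subtraction gives the max). -/
def nuJ (n d j : ℕ) (c : Fin n → ℕ) : ℕ :=
  ∑ i ∈ Finset.range (n - j), (colExt n c i + 1 + j - d)

/-- `ν_min(D,d) = min{ν_j(D,d) : 0 ≤ j ≤ d-1}`. -/
noncomputable def nuMin (n d : ℕ) (c : Fin n → ℕ) : ℕ :=
  sInf {k | ∃ j < d, k = nuJ n d j c}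

/-- A Ferrers diagram is monotone if `c (i+1) > c i` whenever `0 < c i < n`. -/
def DiagMonotone (n : ℕ) (c : Fin n → ℕ) : Prop :=
  ∀ i : Fin n, ∀ hi : (i : ℕ) + 1 < n, 0 < c i → c i < n → c i < c ⟨(i : ℕ) + 1, hi⟩

/-- A Ferrers diagram is convex if `c (i+1) - c i ≤ 1` for all `i`. -/
def DiagConvex (n : ℕ) (c : Fin n → ℕ) : Prop :=
  ∀ i : Fin n, ∀ hi : (i : ℕ) + 1 < n, c ⟨(i : ℕ) + 1, hi⟩ ≤ c i + 1

/-- A Ferrers diagram is strictly monotone if `c (i+1) > c i` whenever `c i > 0`. -/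
def DiagStrictlyMonotone (n : ℕ) (c : Fin n → ℕ) : Prop :=
  ∀ i : Fin n, ∀ hi : (i : ℕ) + 1 < n, 0 < c i → c i < c ⟨(i : ℕ) + 1, hi⟩

/-- A Ferrers diagram is initially convex if `c 1 ≤ 1` and `c (i+1) - c i ≤ 1` for all `i`. -/
def DiagInitiallyConvex (n : ℕ) (c : Fin n → ℕ) : Prop :=
  (∀ h : 0 < n, c ⟨0, h⟩ ≤ 1) ∧ DiagConvex n c

/-- `h` is an admissible `p`-height for the Ferrers diagram `c`: `p^h ∣ n`, `p^h ∣ c i` for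
all `i`, and `c (n-r) = c (n-s)` (1-indexed) whenever `r, s` lie in the same block
`{Q p^h, …, (Q+1) p^h - 1}`. -/
def HeightOK (p n h : ℕ) (c : Fin n → ℕ) : Prop :=
  p ^ h ∣ n ∧ (∀ i, p ^ h ∣ c i) ∧
    ∀ r s : Fin n, (r : ℕ) / p ^ h = (s : ℕ) / p ^ h →
      c ⟨n - 1 - (r : ℕ), by have := r.isLt; omega⟩ =
        c ⟨n - 1 - (s : ℕ), by have := s.isLt; omega⟩

/-- The `p`-height of a Ferrers diagram: the largest admissible `h`. -/
noncomputable def pHeight (p n : ℕ) (c : Fin n → ℕ) : ℕ :=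
  sSup {h | HeightOK p n h c}

/-- The `p`-contraction of a Ferrers diagram: `c'_i = c_{p^h i} / p^h` (1-indexed),
a diagram of order `n / p^h`, where `h` is the `p`-height. -/
noncomputable def pContraction (p n : ℕ) (c : Fin n → ℕ) :
    Fin (n / p ^ pHeight p n c) → ℕ :=
  fun i => colExt n c (p ^ pHeight p n c * ((i : ℕ) + 1) - 1) / p ^ pHeight p n c

/-- A Ferrers diagram is `p`-monotone if its `p`-contraction is monotone. -/
def IsPMonotone (p n : ℕ) (c : Fin n → ℕ) : Prop :=
  DiagMonotone (n / p ^ pHeight p n c) (pContraction p n c)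

/-- A Ferrers diagram is `p`-convex if its `p`-contraction is convex. -/
def IsPConvex (p n : ℕ) (c : Fin n → ℕ) : Prop :=
  DiagConvex (n / p ^ pHeight p n c) (pContraction p n c)

/-- A Ferrers diagram is strictly `p`-monotone if its `p`-contraction is strictly monotone. -/
def IsStrictlyPMonotone (p n : ℕ) (c : Fin n → ℕ) : Prop :=
  DiagStrictlyMonotone (n / p ^ pHeight p n c) (pContraction p n c)

/-- A Ferrers diagram is initially `p`-convex if its `p`-contraction is initially convex. -/
def IsInitiallyPConvex (p n : ℕ) (c : Fin n → ℕ) : Prop :=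
  DiagInitiallyConvex (n / p ^ pHeight p n c) (pContraction p n c)

/-- The adjoint Ferrers diagram: column `j+1` of `D^⊤` has `#{i : c i ≥ n - j}` dots. -/
def adjointDiag (n : ℕ) (c : Fin n → ℕ) : Fin n → ℕ :=
  fun j => (Finset.univ.filter (fun i : Fin n => n - (j : ℕ) ≤ c i)).card

/-- `|D ∩ Δ_{i+1}^n|`: the number of dots of `D` on the (i+1)-st diagonal (0-indexed `i`). -/
def diagDots (n : ℕ) (c : Fin n → ℕ) (i : ℕ) : ℕ :=
  ((Finset.range n).filter (fun r => r + i < n ∧ r < colExt n c (r + i))).card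

/-- The pair `(D, d)` is MDS-constructible if
`ν_min(D,d) = Σ_{i=1}^n max{0, |D ∩ Δ_i^n| - d + 1}`. -/
def IsMDSConstructibleP (n d : ℕ) (c : Fin n → ℕ) : Prop :=
  nuMin n d c = ∑ i ∈ Finset.range n, (diagDots n c i + 1 - d)

/-- `σ̄ = σ - id`, as an `F`-linear endomorphism of `L`. -/
def sbar {F L : Type*} [Field F] [Field L] [Algebra F L] (σ : L ≃ₐ[F] L) :
    L →ₗ[F] L :=
  σ.toLinearMap - LinearMap.id

/-!
Since `σ` generates a group of order `n = p ^ m`, in characteristic `p` we get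
`σ̄ ^ n = σ ^ n - 1 = 0`, and `ker σ̄` is the fixed field `F`, of dimension one. For a nilpotent
endomorphism of an `n`-dimensional space with one-dimensional kernel, `dim ker σ̄ ^ k` grows by at
most one at each step and reaches `n` at step `n`, so `dim F_k = k` for `k ≤ n`. Then `σ̄ ^ j` maps
`F_i` into `F_{i-j}`, and rank–nullity (the kernel of `σ̄ ^ j` on `F_i` being `F_j`) shows that
the image has the full dimension `i - j`.
-/

open Module LinearMap

namespace Module.End

section Semiring

variable {R M : Type*} [Semiring R] [AddCommMonoid M] [Module R M] (N : Module.End R M)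

theorem ker_pow_mono {j i : ℕ} (h : j ≤ i) : ker (N ^ j) ≤ ker (N ^ i) :=
  N.iterateKer.monotone h

theorem map_pow_ker_pow_le (i j : ℕ) : (ker (N ^ i)).map (N ^ j) ≤ ker (N ^ (i - j)) := by
  rintro _ ⟨x, hx : (N ^ i) x = 0, rfl⟩
  rw [mem_ker, ← Module.End.mul_apply, ← pow_add, show i - j + j = max i j - i + i by omega,
    pow_add, Module.End.mul_apply, hx, map_zero]

end Semiring

end Module.End

section FiniteDimensional

variable {K V : Type*} [Field K] [AddCommGroup V] [Module K V] [FiniteDimensional K V]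

theorem Submodule.finrank_map_add_finrank_ker_of_ker_le {W : Type*} [AddCommGroup W] [Module K W]
    (f : V →ₗ[K] W) {U : Submodule K V} (h : ker f ≤ U) :
    finrank K (U.map f) + finrank K (ker f) = finrank K U := by
  have hker : ker (f.domRestrict U) = (ker f).comap U.subtype := ker_domRestrict U f
  rw [← finrank_range_add_finrank_ker (f.domRestrict U), range_domRestrict, hker,
    (Submodule.comapSubtypeEquivOfLe h).finrank_eq]

namespace Module.End

variable (N : Module.End K V)

theorem finrank_ker_pow_succ_le (k : ℕ) :
    finrank K (ker (N ^ (k + 1))) ≤ finrank K (ker (N ^ k)) + finrank K (ker N) := by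
  have hker : ker N ≤ ker (N ^ (k + 1)) := by
    simpa using N.ker_pow_mono (Nat.le_add_left 1 k)
  have hmap : (ker (N ^ (k + 1))).map N ≤ ker (N ^ k) := by
    simpa using N.map_pow_ker_pow_le (k + 1) 1
  rw [← Submodule.finrank_map_add_finrank_ker_of_ker_le N hker]
  gcongr
  exact Submodule.finrank_mono hmap

theorem finrank_ker_pow_add_le (k t : ℕ) :
    finrank K (ker (N ^ (k + t))) ≤ finrank K (ker (N ^ k)) + t * finrank K (ker N) := by
  induction t with
  | zero => simp
  | succ t ih =>
    have := N.finrank_ker_pow_succ_le (k + t)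
    rw [← add_assoc, add_one_mul]
    omega

theorem finrank_ker_pow_of_finrank_ker_eq_one (hN : N ^ finrank K V = 0)
    (hker : finrank K (ker N) = 1) {k : ℕ} (hk : k ≤ finrank K V) :
    finrank K (ker (N ^ k)) = k := by
  have hupper := N.finrank_ker_pow_add_le 0 k
  have hlower := N.finrank_ker_pow_add_le k (finrank K V - k)
  rw [Nat.add_sub_cancel' hk, hN, ker_zero, finrank_top] at hlower
  rw [zero_add, pow_zero, one_eq_id, ker_id, finrank_bot, hker] at hupper
  rw [hker] at hlower
  omega

theorem map_pow_ker_pow_of_finrank_ker_eq_one (hN : N ^ finrank K V = 0)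
    (hker : finrank K (ker N) = 1) {i : ℕ} (hi : i ≤ finrank K V) (j : ℕ) :
    (ker (N ^ i)).map (N ^ j) = ker (N ^ (i - j)) := by
  refine Submodule.eq_of_le_of_finrank_le (N.map_pow_ker_pow_le i j) ?_
  rw [N.finrank_ker_pow_of_finrank_ker_eq_one hN hker (by omega)]
  rcases le_total j i with hji | hij
  · have := Submodule.finrank_map_add_finrank_ker_of_ker_le (N ^ j) (N.ker_pow_mono hji)
    rw [N.finrank_ker_pow_of_finrank_ker_eq_one hN hker hi,
      N.finrank_ker_pow_of_finrank_ker_eq_one hN hker (hji.trans hi)] at this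
    omega
  · simp [Nat.sub_eq_zero_of_le hij]

end Module.End

end FiniteDimensional

section Galois

variable {F L : Type*} [Field F] [Field L] [Algebra F L]

theorem sbar_pow_char_pow_eq_zero {p m : ℕ} [Fact p.Prime] [CharP F p] {σ : L ≃ₐ[F] L}
    (hσ : σ ^ p ^ m = 1) : sbar σ ^ p ^ m = 0 := by
  have : CharP (Module.End F L) p :=
    charP_of_injective_algebraMap (algebraMap F (Module.End F L)).injective p
  rw [sbar, ← Module.End.one_eq_id, sub_pow_char_pow_of_commute p m (Commute.one_right _),
    one_pow, ← AlgEquiv.pow_toLinearMap, hσ, AlgEquiv.one_toLinearMap, sub_self]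

variable [IsGalois F L] [FiniteDimensional F L]

theorem ker_sbar_of_forall_mem_zpowers {σ : L ≃ₐ[F] L}
    (hσ : ∀ τ : L ≃ₐ[F] L, τ ∈ Subgroup.zpowers σ) :
    ker (sbar σ) = Subalgebra.toSubmodule ⊥ := by
  ext x
  rw [mem_ker, sbar, LinearMap.sub_apply, sub_eq_zero, Subalgebra.mem_toSubmodule,
    Algebra.mem_bot, IsGalois.mem_range_algebraMap_iff_fixed]
  refine ⟨fun hx τ => ?_, fun h => h σ⟩
  obtain ⟨k, rfl⟩ := Subgroup.mem_zpowers_iff.mp (hσ τ)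
  exact MulAction.mem_fixedBy_zpow (g := σ) (a := x) hx k

theorem finrank_ker_sbar_of_forall_mem_zpowers {σ : L ≃ₐ[F] L}
    (hσ : ∀ τ : L ≃ₐ[F] L, τ ∈ Subgroup.zpowers σ) : finrank F (ker (sbar σ)) = 1 := by
  rw [ker_sbar_of_forall_mem_zpowers hσ, Subalgebra.finrank_toSubmodule, Subalgebra.finrank_bot]

end Galois

theorem statement3_general {p m : ℕ} (hp : p.Prime)
    {F L : Type*} [Field F] [Field L] [Algebra F L] [IsGalois F L] [FiniteDimensional F L]
    [CharP F p] (hn : Module.finrank F L = p ^ m)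
    (σ : L ≃ₐ[F] L) (hσ : ∀ τ : L ≃ₐ[F] L, τ ∈ Subgroup.zpowers σ)
    (i j : ℕ) (hi : i ≤ p ^ m) :
    Submodule.map (sbar σ ^ j) (LinearMap.ker (sbar σ ^ i)) =
      LinearMap.ker (sbar σ ^ (i - j)) := by
  have : Fact p.Prime := ⟨hp⟩
  have hσn : σ ^ p ^ m = 1 := by
    rw [← hn, ← IsGalois.card_aut_eq_finrank]
    exact pow_card_eq_one'
  have hnil : sbar σ ^ finrank F L = 0 := hn ▸ sbar_pow_char_pow_eq_zero hσn
  exact Module.End.map_pow_ker_pow_of_finrank_ker_eq_one (sbar σ) hnil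
    (finrank_ker_sbar_of_forall_mem_zpowers hσ) (hn ▸ hi) j

/-- for every `i, j ∈ {0,…,n}`, one has `σ̄^j(F_i) = F_{max{0, i-j}}`
(truncated subtraction on `ℕ` realizes the max). -/
theorem statement3 {p m : ℕ} (hp : p.Prime) (hm : 1 ≤ m)
    {F L : Type*} [Field F] [Field L] [Algebra F L] [IsGalois F L] [FiniteDimensional F L]
    [CharP F p] (hn : Module.finrank F L = p ^ m)
    (σ : L ≃ₐ[F] L) (hσ : ∀ τ : L ≃ₐ[F] L, τ ∈ Subgroup.zpowers σ)
    (i j : ℕ) (hi : i ≤ p ^ m) (hj : j ≤ p ^ m) :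
    Submodule.map (sbar σ ^ j) (LinearMap.ker (sbar σ ^ i)) =
      LinearMap.ker (sbar σ ^ (i - j)) :=
  statement3_general hp hn σ hσ i j hi
end

section
/- Let D = (c_1,…,c_n) be a p-monotone Ferrers diagram of order n = p^m. Let λ_1,…,λ_n ∈ L with λ_i ∈ F_{c_i} for each i, and let f ∈ End_F(L) be the endomorphism f = Σ_{i=1}^n λ_i·σ̄^{i−1} (where λ_i acts on L by multiplication). Then f(F_i) ⊆ F_{c_i} for every i ∈ {1,…,n}. -/
/-!
Let `q = p ^ h` with `h` the `p`-height of `D`, and `τ = σ ^ q`. In characteristic `p` we have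
`σ̄ ^ q = τ - id =: τ̄`, and `τ̄` is a twisted derivation, `τ̄ (a b) = τ a · τ̄ b + τ̄ a · b`, so
`ker τ̄ ^ s · ker τ̄ ^ t ⊆ ker τ̄ ^ (s + t - 1)`. For `j ≤ i`, `q ∣ c_j` gives `λ_j ∈ ker τ̄ ^ (c_j / q)`
and `σ̄ ^ j x ∈ ker τ̄ ^ (⌊(i - j) / q⌋ + 1)`, so `λ_j · σ̄ ^ j x` is killed by
`σ̄ ^ (c_j + q ⌊(i - j) / q⌋)`. Since the columns of `D` are constant on blocks of length `q` and
the contraction is monotone, the column height grows by at least `q` from one block to the next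
until it reaches `n`, whence `c_j + q ⌊(i - j) / q⌋ ≤ c_i` whenever `0 < c_j` and `c_i < n`.
-/

theorem Nat.sub_one_sub_div_add_div_add_one {n q a : ℕ} (hq : q ∣ n) (ha : a < n) :
    (n - 1 - a) / q + a / q + 1 = n / q := by
  obtain ⟨N, rfl⟩ := hq
  have hq : 0 < q := Nat.pos_of_ne_zero (by rintro rfl; simp at ha)
  obtain ⟨D, hD⟩ := Nat.exists_eq_add_of_lt (Nat.div_lt_of_lt_mul ha)
  have hr := Nat.mod_lt a hq
  have key : q * N - 1 - a = (q - 1 - a % q) + q * D := by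
    have := Nat.mod_add_div a q
    rw [hD, Nat.mul_add, Nat.mul_add, mul_one]
    omega
  rw [key, Nat.add_mul_div_left _ _ hq, Nat.div_eq_of_lt (by omega),
    Nat.mul_div_cancel_left _ hq]
  omega

theorem Nat.mul_add_one_sub_one_lt_of_lt_div {n q k : ℕ} (hk : k < n / q) :
    q * (k + 1) - 1 < n := by
  rcases Nat.eq_zero_or_pos q with rfl | hq
  · simp at hk
  have h₁ : (k + 1) * q ≤ n := (Nat.le_div_iff_mul_le hq).mp hk
  have h₂ : q ≤ (k + 1) * q := Nat.le_mul_of_pos_left q (Nat.succ_pos k)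
  rw [mul_comm]
  omega

theorem Nat.mul_add_one_sub_one_div {q : ℕ} (hq : 0 < q) (k : ℕ) : (q * (k + 1) - 1) / q = k := by
  rw [show q * (k + 1) - 1 = q - 1 + q * k by rw [Nat.mul_add]; omega,
    Nat.add_mul_div_left _ _ hq, Nat.div_eq_of_lt (by omega), zero_add]

section FerrersDiagram

variable {p n : ℕ} {c : Fin n → ℕ}

theorem heightOK_pHeight (hp : 1 < p) (hn : 0 < n) (c : Fin n → ℕ) :
    HeightOK p n (pHeight p n c) c := by
  have h0 : HeightOK p n 0 c := by
    refine ⟨one_dvd _, fun _ => one_dvd _, fun r s hrs => ?_⟩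
    simp only [pow_zero, Nat.div_one] at hrs
    simp only [hrs]
  have hbdd : BddAbove {h | HeightOK p n h c} :=
    ⟨n, fun h hh => ((Nat.lt_pow_self hp).trans_le (Nat.le_of_dvd hn hh.1)).le⟩
  exact Nat.sSup_mem ⟨0, h0⟩ hbdd

theorem HeightOK.apply_eq_of_div_eq {h : ℕ} (hc : HeightOK p n h c) {a b : Fin n}
    (hab : (a : ℕ) / p ^ h = b / p ^ h) : c a = c b := by
  have ha := Nat.sub_one_sub_div_add_div_add_one hc.1 a.isLt
  have hb := Nat.sub_one_sub_div_add_div_add_one hc.1 b.isLt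
  have := hc.2.2 ⟨n - 1 - a, by omega⟩ ⟨n - 1 - b, by omega⟩ (by simp only; omega)
  simpa only [show n - 1 - (n - 1 - a) = a by omega, show n - 1 - (n - 1 - b) = b by omega]
    using this

theorem pContraction_apply (k : Fin (n / p ^ pHeight p n c)) :
    pContraction p n c k = c ⟨p ^ pHeight p n c * (k + 1) - 1,
      Nat.mul_add_one_sub_one_lt_of_lt_div k.isLt⟩ / p ^ pHeight p n c := by
  simp only [pContraction, colExt, Nat.mul_add_one_sub_one_lt_of_lt_div k.isLt, dif_pos]

theorem apply_eq_mul_pContraction (hp : 1 < p) (a : Fin n) :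
    c a = p ^ pHeight p n c * pContraction p n c
      ⟨a / p ^ pHeight p n c,
        Nat.div_lt_div_of_lt_of_dvd (heightOK_pHeight hp a.pos c).1 a.isLt⟩ := by
  have hc := heightOK_pHeight hp a.pos c
  have hq : 0 < p ^ pHeight p n c := pow_pos (zero_lt_one.trans hp) _
  rw [pContraction_apply]
  dsimp only
  rw [hc.apply_eq_of_div_eq (a := ⟨_, _⟩) (b := a) (Nat.mul_add_one_sub_one_div hq _),
    Nat.mul_div_cancel' (hc.2.1 a)]

theorem pContraction_monotone (hc : Monotone c) : Monotone (pContraction p n c) := by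
  intro k l hkl
  rw [pContraction_apply, pContraction_apply]
  refine Nat.div_le_div_right (hc ?_)
  rw [Fin.mk_le_mk]
  have := Nat.mul_le_mul_left (p ^ pHeight p n c) (Nat.add_le_add_right (Fin.le_def.mp hkl) 1)
  omega

theorem DiagMonotone.add_sub_le {N : ℕ} {c : Fin N → ℕ} (hc : DiagMonotone N c)
    (hmono : Monotone c) {k l : Fin N} (hkl : k ≤ l) (hk : 0 < c k) (hl : c l < N) :
    c k + (l - k : ℕ) ≤ c l := by
  obtain ⟨d, hd⟩ := Nat.exists_eq_add_of_le (Fin.le_def.mp hkl)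
  induction d generalizing l with
  | zero => simp [Fin.ext (hd.trans (add_zero _))]
  | succ d ih =>
    let l' : Fin N := ⟨k + d, by omega⟩
    have hl'l : l' ≤ l := Fin.le_def.mpr (by simp only [l']; omega)
    have hl' : c l' < N := (hmono hl'l).trans_lt hl
    have hprev := ih (Fin.le_def.mpr (Nat.le_add_right _ _)) hl' rfl
    have hstep := hc l' (by simp only [l']; omega) (hk.trans_le (hmono (Fin.le_def.mpr
      (Nat.le_add_right _ _)))) hl'
    rw [show (⟨(l' : ℕ) + 1, _⟩ : Fin N) = l from Fin.ext (by simp only [l']; omega)] at hstep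
    have hl'val : (l' : ℕ) = k + d := rfl
    omega

theorem IsPMonotone.add_mul_div_le (hp : 1 < p) (hmon : IsPMonotone p n c) (hc : Monotone c)
    {i j : Fin n} (hji : j ≤ i) (hj : 0 < c j) (hi : c i < n) :
    c j + p ^ pHeight p n c * ((i - j : ℕ) / p ^ pHeight p n c) ≤ c i := by
  rw [apply_eq_mul_pContraction (c := c) hp i] at hi ⊢
  rw [apply_eq_mul_pContraction (c := c) hp j] at hj ⊢
  set q := p ^ pHeight p n c
  have hn : q * (n / q) = n := Nat.mul_div_cancel' (heightOK_pHeight hp i.pos c).1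
  have hchain := hmon.add_sub_le (pContraction_monotone hc)
    (Fin.le_def.mpr (Nat.div_le_div_right (Fin.le_def.mp hji))) (Nat.pos_of_mul_pos_left hj)
    (Nat.lt_of_mul_lt_mul_left (hi.trans_eq hn.symm))
  have hdiv : (i - j : ℕ) / q ≤ i / q - j / q := by
    have := Nat.div_add_div_le_add_div (x := i - j) (y := j) (z := q)
    rw [Nat.sub_add_cancel (Fin.le_def.mp hji)] at this
    omega
  calc _ ≤ _ := Nat.add_le_add_left (Nat.mul_le_mul_left _ hdiv) _
    _ = _ := (Nat.mul_add _ _ _).symm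
    _ ≤ _ := Nat.mul_le_mul_left _ hchain

end FerrersDiagram

theorem Module.End.ker_pow_le_ker_pow_of_le {R M : Type*} [Semiring R] [AddCommMonoid M]
    [Module R M] (f : Module.End R M) {a b : ℕ} (hab : a ≤ b) :
    LinearMap.ker (f ^ a) ≤ LinearMap.ker (f ^ b) := by
  rw [← Nat.sub_add_cancel hab, pow_add, Module.End.mul_eq_comp]
  exact LinearMap.ker_le_ker_comp _ _

theorem Module.End.pow_apply_mem_ker_pow {R M : Type*} [Semiring R] [AddCommMonoid M]
    [Module R M] {f : Module.End R M} {j k : ℕ} {x : M} (hx : x ∈ LinearMap.ker (f ^ (k + j))) :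
    (f ^ j) x ∈ LinearMap.ker (f ^ k) := by
  rwa [LinearMap.mem_ker, ← Module.End.mul_apply, ← pow_add]

section TwistedDerivation

variable {F L : Type*} [Field F] [Field L] [Algebra F L]

theorem sbar_apply (τ : L ≃ₐ[F] L) (x : L) : sbar τ x = τ x - x := rfl

theorem sbar_one : sbar (1 : L ≃ₐ[F] L) = 0 := by
  ext x
  simp [sbar_apply]

theorem sbar_mul (τ : L ≃ₐ[F] L) (a b : L) : sbar τ (a * b) = τ a * sbar τ b + sbar τ a * b := by
  simp only [sbar_apply, map_mul]
  ring

theorem sbar_pow_comm_apply (τ : L ≃ₐ[F] L) (k : ℕ) (x : L) :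
    (sbar τ ^ k) (τ x) = τ ((sbar τ ^ k) x) := by
  have h : Commute (sbar τ) τ.toLinearMap := (Commute.refl _).sub_left (Commute.one_left _)
  exact LinearMap.congr_fun (h.pow_left k).eq x

theorem mul_mem_ker_sbar_pow (τ : L ≃ₐ[F] L) {s t : ℕ} {a b : L}
    (ha : a ∈ LinearMap.ker (sbar τ ^ s)) (hb : b ∈ LinearMap.ker (sbar τ ^ t)) :
    a * b ∈ LinearMap.ker (sbar τ ^ (s + t - 1)) := by
  induction s generalizing t a b with
  | zero =>
    rw [LinearMap.mem_ker, pow_zero, Module.End.one_apply] at ha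
    simp [ha]
  | succ s ihs =>
    induction t generalizing a b with
    | zero =>
      rw [LinearMap.mem_ker, pow_zero, Module.End.one_apply] at hb
      simp [hb]
    | succ t iht =>
      have hτa : τ a ∈ LinearMap.ker (sbar τ ^ (s + 1)) := by
        rw [LinearMap.mem_ker, sbar_pow_comm_apply, LinearMap.mem_ker.mp ha, map_zero]
      have h₁ := iht hτa (Module.End.pow_apply_mem_ker_pow (j := 1) hb)
      have h₂ := ihs (Module.End.pow_apply_mem_ker_pow (j := 1) ha) hb
      rw [pow_one] at h₁ h₂
      rw [show s + 1 + t - 1 = s + t by omega] at h₁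
      rw [show s + (t + 1) - 1 = s + t by omega] at h₂
      rw [show s + 1 + (t + 1) - 1 = s + t + 1 by omega, LinearMap.mem_ker, pow_succ,
        Module.End.mul_apply, sbar_mul, map_add, LinearMap.mem_ker.mp h₁,
        LinearMap.mem_ker.mp h₂, add_zero]

theorem sbar_pow_expChar_pow {p : ℕ} [ExpChar F p] (σ : L ≃ₐ[F] L) (k : ℕ) :
    sbar σ ^ p ^ k = sbar (σ ^ p ^ k) := by
  have := expChar_of_injective_algebraMap (algebraMap F (Module.End F L)).injective p
  have hpow : (σ ^ p ^ k).toLinearMap = σ.toLinearMap ^ p ^ k :=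
    map_pow (AlgEquiv.toLinearMapHom F L) σ _
  rw [sbar, sbar, ← Module.End.one_eq_id,
    sub_pow_expChar_pow_of_commute _ _ (Commute.one_right _), one_pow, hpow]

theorem mul_mem_ker_sbar_pow_mul_add {p : ℕ} [ExpChar F p] (σ : L ≃ₐ[F] L) {h a k : ℕ} {u y : L}
    (hu : u ∈ LinearMap.ker (sbar σ ^ (p ^ h * a))) (hy : y ∈ LinearMap.ker (sbar σ ^ (k + 1))) :
    u * y ∈ LinearMap.ker (sbar σ ^ (p ^ h * a + p ^ h * (k / p ^ h))) := by
  have hq : 0 < p ^ h := pow_pos (expChar_pos F p) h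
  have hy' : y ∈ LinearMap.ker (sbar (σ ^ p ^ h) ^ (k / p ^ h + 1)) := by
    rw [← sbar_pow_expChar_pow, ← pow_mul]
    exact Module.End.ker_pow_le_ker_pow_of_le _ (Nat.lt_mul_div_succ k hq) hy
  rw [pow_mul, sbar_pow_expChar_pow] at hu
  rw [← Nat.mul_add, pow_mul, sbar_pow_expChar_pow]
  simpa using mul_mem_ker_sbar_pow _ hu hy'

end TwistedDerivation

theorem statement5_general {p m : ℕ} (hp : p.Prime)
    {F L : Type*} [Field F] [Field L] [Algebra F L] [IsGalois F L] [FiniteDimensional F L]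
    [CharP F p] (hn : Module.finrank F L = p ^ m)
    (σ : L ≃ₐ[F] L)
    (c : Fin (p ^ m) → ℕ) (hferr : IsFerrersDiagram (p ^ m) c)
    (hmon : IsPMonotone p (p ^ m) c)
    (lam : Fin (p ^ m) → L) (hlam : ∀ i, lam i ∈ LinearMap.ker (sbar σ ^ c i))
    (f : L →ₗ[F] L)
    (hf : ∀ x : L, f x = ∑ i : Fin (p ^ m), lam i * (sbar σ ^ (i : ℕ)) x)
    (i : Fin (p ^ m)) (x : L) (hx : x ∈ LinearMap.ker (sbar σ ^ ((i : ℕ) + 1))) :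
    f x ∈ LinearMap.ker (sbar σ ^ c i) := by
  have : ExpChar F p := ExpChar.prime hp
  have hσ : σ ^ p ^ m = 1 := by
    rw [← hn, ← IsGalois.card_aut_eq_finrank]
    exact pow_card_eq_one'
  have hnil : sbar σ ^ p ^ m = 0 := by rw [sbar_pow_expChar_pow, hσ, sbar_one]
  rw [LinearMap.mem_ker, hf, map_sum]
  refine Finset.sum_eq_zero fun j _ => LinearMap.mem_ker.mp ?_
  obtain hij | hji := lt_or_ge i j
  · rw [LinearMap.mem_ker.mp (Module.End.ker_pow_le_ker_pow_of_le _ hij hx), mul_zero]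
    exact zero_mem _
  obtain hcj | hcj := (c j).eq_zero_or_pos
  · have hlamj := hlam j
    rw [hcj, LinearMap.mem_ker, pow_zero, Module.End.one_apply] at hlamj
    rw [hlamj, zero_mul]
    exact zero_mem _
  obtain hci | hci := (hferr.2 i).eq_or_lt
  · rw [hci, hnil, LinearMap.ker_zero]
    exact Submodule.mem_top
  obtain ⟨a, ha⟩ := (heightOK_pHeight hp.one_lt (pow_pos hp.pos m) c).2.1 j
  have hy : (sbar σ ^ (j : ℕ)) x ∈ LinearMap.ker (sbar σ ^ ((i - j : ℕ) + 1)) := by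
    refine Module.End.pow_apply_mem_ker_pow ?_
    rwa [add_right_comm, Nat.sub_add_cancel hji]
  have hprod := mul_mem_ker_sbar_pow_mul_add σ (ha ▸ hlam j) hy
  rw [← ha] at hprod
  exact Module.End.ker_pow_le_ker_pow_of_le _ (hmon.add_mul_div_le hp.one_lt hferr.1 hji hcj hci)
    hprod

/-- if `D = (c_1,…,c_n)` is a `p`-monotone Ferrers diagram of order
`n = p^m`, `λ_i ∈ F_{c_i}` for each `i`, and `f = Σ_{i=1}^n λ_i · σ̄^{i-1}`, then
`f(F_i) ⊆ F_{c_i}` for every `i ∈ {1,…,n}`. -/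
theorem statement5 {p m : ℕ} (hp : p.Prime) (hm : 1 ≤ m)
    {F L : Type*} [Field F] [Field L] [Algebra F L] [IsGalois F L] [FiniteDimensional F L]
    [CharP F p] (hn : Module.finrank F L = p ^ m)
    (σ : L ≃ₐ[F] L) (hσ : ∀ τ : L ≃ₐ[F] L, τ ∈ Subgroup.zpowers σ)
    (c : Fin (p ^ m) → ℕ) (hferr : IsFerrersDiagram (p ^ m) c)
    (hmon : IsPMonotone p (p ^ m) c)
    (lam : Fin (p ^ m) → L) (hlam : ∀ i, lam i ∈ LinearMap.ker (sbar σ ^ c i))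
    (f : L →ₗ[F] L)
    (hf : ∀ x : L, f x = ∑ i : Fin (p ^ m), lam i * (sbar σ ^ (i : ℕ)) x)
    (i : Fin (p ^ m)) (x : L) (hx : x ∈ LinearMap.ker (sbar σ ^ ((i : ℕ) + 1))) :
    f x ∈ LinearMap.ker (sbar σ ^ c i) :=
  statement5_general hp hn σ c hferr hmon lam hlam f hf i x hx
end
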